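/- For any connected graphs G and H, γ_P(G □ H) ≥ γ_P(H). -/

import Mathlib

namespace PaperPD

open SimpleGraph

variable {V : Type} {W : Type}

/-- Observation process for power domination on a simple graph. -/
inductive Observed (G : SimpleGraph V) (S : Set V) : V → Prop
  | mem : ∀ v ∈ S, Observed G S v
  | dom : ∀ u v, u ∈ S → G.Adj u v → Observed G S v
  | prop : ∀ u v, Observed G S u → G.Adj u v →
      (∀ w, G.Adj u w → w ≠ v → Observed G S w) → Observed G S v

/-- `S` is a power dominating set of `G`. -/
def IsPDS (G : SimpleGraph V) (S : Set V) : Prop := ∀ v, Observed G S v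

/-- Power domination number. -/
noncomputable def pdNum (G : SimpleGraph V) [Fintype V] : ℕ :=
  sInf {n | ∃ S : Finset V, S.card = n ∧ IsPDS G ↑S}

/-- Zero forcing process. -/
inductive Forced (G : SimpleGraph V) (S : Set V) : V → Prop
  | mem : ∀ v ∈ S, Forced G S v
  | prop : ∀ u v, Forced G S u → G.Adj u v →
      (∀ w, G.Adj u w → w ≠ v → Forced G S w) → Forced G S v

/-- Zero forcing number. -/
noncomputable def zNum (G : SimpleGraph V) [Fintype V] : ℕ :=
  sInf {n | ∃ S : Finset V, S.card = n ∧ ∀ v, Forced G S v}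

/-- Domination number. -/
noncomputable def domNum (G : SimpleGraph V) [Fintype V] : ℕ :=
  sInf {n | ∃ S : Finset V, S.card = n ∧ ∀ v, ∃ u ∈ S, v = u ∨ G.Adj u v}

/-- No induced `K_{1,3}`. -/
def ClawFree (G : SimpleGraph V) : Prop :=
  ∀ x a b c : V, a ≠ b → a ≠ c → b ≠ c →
    G.Adj x a → G.Adj x b → G.Adj x c →
    ¬ G.Adj a b → ¬ G.Adj a c → ¬ G.Adj b c → False

/-- No induced `K₄` minus an edge. -/
def DiamondFree (G : SimpleGraph V) : Prop :=
  ∀ a b c d : V, a ≠ b → a ≠ c → a ≠ d → b ≠ c → b ≠ d → c ≠ d →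
    G.Adj a b → G.Adj a c → G.Adj b c → G.Adj b d → G.Adj c d →
    ¬ G.Adj a d → False

/-- A leaf: a vertex with exactly one neighbor. -/
def IsLeaf (G : SimpleGraph V) (v : V) : Prop := ∃! u, G.Adj v u

/-- A strong support vertex: adjacent to at least two leaves. -/
def IsStrongSupport (G : SimpleGraph V) (x : V) : Prop :=
  ∃ a b, a ≠ b ∧ G.Adj x a ∧ G.Adj x b ∧ IsLeaf G a ∧ IsLeaf G b

/-- Number of strong support vertices. -/
noncomputable def ssCount (G : SimpleGraph V) : ℕ :=
  Nat.card {v // IsStrongSupport G v}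

/-- Connected with no bridges. -/
def TwoEdgeConnected (G : SimpleGraph V) : Prop :=
  G.Connected ∧ ∀ e, ¬ G.IsBridge e

/-- A loopless multigraph, given by symmetric edge multiplicities. -/
structure Multigraph (W : Type) where
  mult : W → W → ℕ
  symm : ∀ u v, mult u v = mult v u
  loopless : ∀ v, mult v v = 0

/-- Underlying simple graph of a multigraph. -/
def Multigraph.toSimple (M : Multigraph W) : SimpleGraph W where
  Adj u v := u ≠ v ∧ 0 < M.mult u v
  symm := ⟨fun u v h => ⟨h.1.symm, by rw [M.symm]; exact h.2⟩⟩
  loopless := ⟨fun v h => h.1 rfl⟩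

/-- Degree of a vertex in a multigraph (counting multiplicities). -/
def Multigraph.degree [Fintype W] (M : Multigraph W) (v : W) : ℕ :=
  ∑ u, M.mult v u

/-- Bridgeless multigraph: no single edge is a cut edge (a parallel edge
is never a bridge). -/
def Multigraph.Bridgeless (M : Multigraph W) : Prop :=
  ∀ u v, M.mult u v = 1 → ¬ M.toSimple.IsBridge s(u, v)

/-- A 2-factor of a multigraph, given by sub-multiplicities. -/
def Multigraph.IsTwoFactor [Fintype W] (M : Multigraph W) (f : W → W → ℕ) : Prop :=
  (∀ u v, f u v ≤ M.mult u v) ∧ (∀ u v, f u v = f v u) ∧ (∀ v, ∑ u, f v u = 2)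

/-- Observation process for power domination on a multigraph: propagation
only happens along single edges. -/
inductive MObserved (M : Multigraph W) (S : Set W) : W → Prop
  | mem : ∀ v ∈ S, MObserved M S v
  | dom : ∀ u v, u ∈ S → 0 < M.mult u v → MObserved M S v
  | prop : ∀ u v, MObserved M S u → M.mult u v = 1 →
      (∀ w, 0 < M.mult u w → w ≠ v → MObserved M S w) → MObserved M S v

/-- Power domination number of a multigraph. -/
noncomputable def mpdNum (M : Multigraph W) [Fintype W] : ℕ :=
  sInf {n | ∃ S : Finset W, S.card = n ∧ ∀ v, MObserved M ↑S v}

section PowerDomination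

variable {G : SimpleGraph V} {H : SimpleGraph W}

theorem exists_isPDS_card_eq_pdNum [Fintype V] (G : SimpleGraph V) :
    ∃ S : Finset V, S.card = pdNum G ∧ IsPDS G ↑S :=
  Nat.sInf_mem (s := {n | ∃ S : Finset V, S.card = n ∧ IsPDS G ↑S})
    ⟨_, Finset.univ, rfl, fun v => Observed.mem v (Finset.mem_coe.2 (Finset.mem_univ v))⟩

theorem pdNum_le_card [Fintype V] {S : Finset V} (hS : IsPDS G ↑S) : pdNum G ≤ S.card :=
  Nat.sInf_le ⟨S, rfl, hS⟩

/-- Steps along `G`-edges keep the `H`-coordinate, and a forcing step along an `H`-edge from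
`(g, h)` projects to a forcing step from `h`, whose other neighbours `w` come from the other
neighbours `(g, w)`. -/
theorem Observed.boxProd_snd {S : Set (V × W)} {p : V × W}
    (hp : Observed (G □ H) S p) : Observed H (Prod.snd '' S) p.2 := by
  induction hp with
  | mem v hv => exact Observed.mem _ ⟨v, hv, rfl⟩
  | dom u v hu hadj =>
    rcases hadj with ⟨-, hsnd⟩ | ⟨hH, -⟩
    · exact Observed.mem _ ⟨u, hu, hsnd⟩
    · exact Observed.dom u.2 v.2 ⟨u, hu, rfl⟩ hH
  | prop u v _ hadj _ ihu ihothers =>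
    rcases hadj with ⟨-, hsnd⟩ | ⟨hH, -⟩
    · exact hsnd ▸ ihu
    · refine Observed.prop u.2 v.2 ihu hH fun w hw hwv => ?_
      have hne : (u.1, w) ≠ v := fun h => hwv (h ▸ rfl)
      exact ihothers (u.1, w) (Or.inr ⟨hw, rfl⟩) hne

theorem IsPDS.image_snd [Nonempty V] {S : Set (V × W)} (hS : IsPDS (G □ H) S) :
    IsPDS H (Prod.snd '' S) := fun h =>
  (hS (Classical.arbitrary V, h)).boxProd_snd

end PowerDomination

theorem stmt7_general {V W : Type} [Fintype V] [Fintype W]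
    (G : SimpleGraph V) (H : SimpleGraph W)
    (hG : G.Connected) :
    pdNum H ≤ pdNum (G.boxProd H) := by
  classical
  have : Nonempty V := hG.nonempty
  obtain ⟨S, hcard, hS⟩ := exists_isPDS_card_eq_pdNum (G □ H)
  have hproj : IsPDS H ↑(S.image Prod.snd) := by
    rw [Finset.coe_image]
    exact hS.image_snd
  calc pdNum H ≤ (S.image Prod.snd).card := pdNum_le_card hproj
    _ ≤ S.card := Finset.card_image_le
    _ = pdNum (G □ H) := hcard

theorem stmt7 {V W : Type} [Fintype V] [Fintype W]
    (G : SimpleGraph V) (H : SimpleGraph W)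
    (hG : G.Connected) (hH : H.Connected) :
    pdNum H ≤ pdNum (G.boxProd H) :=
  stmt7_general G H hG

end PaperPD
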